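/- arXiv:1507.07460 — 2 statements merged into one kernel-verified Lean document; each statement's English description precedes it below -/
import Mathlib

section
/- Let A be a nonnegative weakly irreducible tensor of order m and dimension n. Then rho(A) = min over positive vectors x of max over circuits gamma in G_A of (prod_{i in gamma} (A x^{m-1})_i / x_i^{m-1})^{1/|gamma|}, and also rho(A) = max over positive vectors x of min over circuits gamma in G_A of (prod_{i in gamma} (A x^{m-1})_i / x_i^{m-1})^{1/|gamma|}. -/
open scoped BigOperators
open Finset

/-- The arc relation of the digraph `G_A` of an order-`m` dimension-`n` tensor `A`,
    whose entries are indexed by a head index and a tail of `m - 1` indices: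
    `(i, j)` is an arc when some entry `a_{i i_2 ... i_m} ≠ 0` has `j` among `i_2, ..., i_m`. -/
def tArc (m n : ℕ) (A : Fin n → (Fin (m - 1) → Fin n) → ℝ) (i j : Fin n) : Prop :=
  ∃ t : Fin (m - 1) → Fin n, A i t ≠ 0 ∧ j ∈ Set.range t

/-- A digraph (given by its arc relation) is strongly connected. -/
def StronglyConnected {n : ℕ} (arc : Fin n → Fin n → Prop) : Prop :=
  ∀ i j : Fin n, Relation.ReflTransGen arc i j

/-- `γ 0, γ 1, ..., γ p = γ 0` is a circuit (closed directed walk, loops allowed)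
    of length `p` in the digraph with arc relation `arc`. -/
def IsCircuit {n : ℕ} (arc : Fin n → Fin n → Prop) (p : ℕ) (γ : ℕ → Fin n) : Prop :=
  0 < p ∧ γ p = γ 0 ∧ ∀ j < p, arc (γ j) (γ (j + 1))

/-- `lam` is an eigenvalue of the order-`m` dimension-`n` real tensor `A`:
    there is a nonzero complex vector `x` with `A x^{m-1} = lam x^{[m-1]}`. -/
def IsEig (m n : ℕ) (A : Fin n → (Fin (m - 1) → Fin n) → ℝ) (lam : ℂ) : Prop :=
  ∃ x : Fin n → ℂ, x ≠ 0 ∧ ∀ i : Fin n,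
    ∑ t : Fin (m - 1) → Fin n, (A i t : ℂ) * ∏ j, x (t j) = lam * x i ^ (m - 1)

/-- The spectral radius of a tensor: the supremum of moduli of its eigenvalues. -/
noncomputable def specRad (m n : ℕ) (A : Fin n → (Fin (m - 1) → Fin n) → ℝ) : ℝ :=
  sSup {r : ℝ | ∃ lam : ℂ, IsEig m n A lam ∧ ‖lam‖ = r}

/-- The `i`-th slice sum `K_i = ∑_{i_2,...,i_m} a_{i i_2 ... i_m}`. -/
def sliceSum (m n : ℕ) (A : Fin n → (Fin (m - 1) → Fin n) → ℝ) (i : Fin n) : ℝ :=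
  ∑ t : Fin (m - 1) → Fin n, A i t

/-- `(A x^{m-1})_i = ∑_{i_2,...,i_m} a_{i i_2 ... i_m} x_{i_2} ⋯ x_{i_m}`. -/
def Ax (m n : ℕ) (A : Fin n → (Fin (m - 1) → Fin n) → ℝ) (x : Fin n → ℝ) (i : Fin n) : ℝ :=
  ∑ t : Fin (m - 1) → Fin n, A i t * ∏ j, x (t j)

/-!
By a Collatz–Wielandt maximisation, every positive tensor `A + ε` has an eigenpair `(ρ_ε, u_ε)`
with `u_ε > 0` and `max u_ε = 1`. Along an arc `i → j` of `G_A`, the eigen-equation gives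
`u_j / min u ≤ K (u_i / min u)^{m-1}` with `K` independent of `ε`, so strong connectivity bounds
`1 / min u_ε` uniformly; a compactness argument as `ε → 0` then yields an eigenpair `(ρ, u)` of `A`
with `u > 0`. Comparing with `u`, every eigenvalue has modulus at most `ρ`, so `ρ(A) = ρ`.

For `x > 0`, let `σ i` be an out-neighbour of `i` minimising `x_j / u_j`. Then
`(A x^{m-1})_i / x_i^{m-1} ≥ ρ z_{σ i} / z_i` with `z = (x / u)^{m-1}`; a cycle of `σ` is a circuit
of `G_A`, along which the factors `z_{σ i} / z_i` multiply to `1`, so some circuit mean is `≥ ρ`.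
Maximising instead gives a circuit mean `≤ ρ`, and for `x = u` every circuit mean equals `ρ`.
-/

open Filter Topology

section TensorAction

variable {m n : ℕ} {A B : Fin n → (Fin (m - 1) → Fin n) → ℝ}

lemma Ax_nonneg (hA : ∀ i t, 0 ≤ A i t) {x : Fin n → ℝ} (hx : ∀ i, 0 ≤ x i) (i : Fin n) :
    0 ≤ Ax m n A x i :=
  sum_nonneg fun t _ => mul_nonneg (hA i t) (prod_nonneg fun j _ => hx (t j))

lemma Ax_smul (A : Fin n → (Fin (m - 1) → Fin n) → ℝ) (x : Fin n → ℝ) (c : ℝ) (i : Fin n) :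
    Ax m n A (c • x) i = c ^ (m - 1) * Ax m n A x i := by
  rw [Ax, Ax, mul_sum]
  refine sum_congr rfl fun t _ => ?_
  simp only [Pi.smul_apply, smul_eq_mul, prod_mul_distrib, prod_const, card_univ,
    Fintype.card_fin]
  ring

lemma Ax_zero (hm : m - 1 ≠ 0) (A : Fin n → (Fin (m - 1) → Fin n) → ℝ) (i : Fin n) :
    Ax m n A 0 i = 0 := by
  simp [Ax, zero_pow hm]

lemma Ax_add_const (A : Fin n → (Fin (m - 1) → Fin n) → ℝ) (x : Fin n → ℝ) (ε : ℝ) (i : Fin n) :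
    Ax m n (fun i t => A i t + ε) x i = Ax m n A x i + ε * (∑ j, x j) ^ (m - 1) := by
  have hpow : (∑ j, x j) ^ (m - 1) = ∑ t : Fin (m - 1) → Fin n, ∏ l, x (t l) := by
    rw [← Fin.prod_const, prod_univ_sum]
    rfl
  rw [hpow, Ax, Ax, mul_sum, ← sum_add_distrib]
  exact sum_congr rfl fun t _ => by ring

@[fun_prop]
lemma continuous_Ax (A : Fin n → (Fin (m - 1) → Fin n) → ℝ) (i : Fin n) :
    Continuous fun x : Fin n → ℝ => Ax m n A x i := by
  unfold Ax
  fun_prop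

lemma Ax_le_Ax_of_forall_tArc (hA : ∀ i t, 0 ≤ A i t) {x y : Fin n → ℝ} {i : Fin n}
    (h : ∀ j, tArc m n A i j → 0 ≤ x j ∧ x j ≤ y j) : Ax m n A x i ≤ Ax m n A y i := by
  refine sum_le_sum fun t _ => ?_
  rcases (hA i t).eq_or_lt with h0 | hpos
  · simp [← h0]
  · have hxy : ∀ l, 0 ≤ x (t l) ∧ x (t l) ≤ y (t l) := fun l => h _ ⟨t, hpos.ne', l, rfl⟩
    exact mul_le_mul_of_nonneg_left
      (prod_le_prod (fun l _ => (hxy l).1) fun l _ => (hxy l).2) hpos.le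

lemma Ax_mono (hA : ∀ i t, 0 ≤ A i t) {x y : Fin n → ℝ} (hx : ∀ i, 0 ≤ x i)
    (hxy : ∀ i, x i ≤ y i) (i : Fin n) : Ax m n A x i ≤ Ax m n A y i :=
  Ax_le_Ax_of_forall_tArc hA fun j _ => ⟨hx j, hxy j⟩

lemma Ax_mono_tensor (hAB : ∀ i t, A i t ≤ B i t) {x : Fin n → ℝ} (hx : ∀ i, 0 ≤ x i)
    (i : Fin n) : Ax m n A x i ≤ Ax m n B x i :=
  sum_le_sum fun t _ => mul_le_mul_of_nonneg_right (hAB i t) (prod_nonneg fun j _ => hx (t j))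

lemma Ax_lt_Ax (hm : m - 1 ≠ 0) (hB : ∀ i t, 0 < B i t) {x y : Fin n → ℝ} (hx : ∀ i, 0 ≤ x i)
    (hxy : ∀ i, x i ≤ y i) {k : Fin n} (hk : x k < y k) (i : Fin n) :
    Ax m n B x i < Ax m n B y i := by
  refine sum_lt_sum (fun t _ => mul_le_mul_of_nonneg_left
    (prod_le_prod (fun l _ => hx (t l)) fun l _ => hxy (t l)) (hB i t).le)
    ⟨fun _ => k, mem_univ _, ?_⟩
  simp only [prod_const, card_univ, Fintype.card_fin]
  exact mul_lt_mul_of_pos_left (pow_lt_pow_left₀ hk (hx k) hm) (hB i _)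

lemma Ax_pos (hm : m - 1 ≠ 0) (hB : ∀ i t, 0 < B i t) {x : Fin n → ℝ} (hx : ∀ i, 0 ≤ x i)
    {k : Fin n} (hk : 0 < x k) (i : Fin n) : 0 < Ax m n B x i :=
  Ax_zero hm B i ▸ Ax_lt_Ax hm hB (fun _ => le_rfl) hx hk i

lemma mul_le_Ax_of_one_le (hA : ∀ i t, 0 ≤ A i t) {w : Fin n → ℝ} (hw : ∀ j, 1 ≤ w j)
    (i : Fin n) (t : Fin (m - 1) → Fin n) (l : Fin (m - 1)) : A i t * w (t l) ≤ Ax m n A w i := by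
  classical
  have hprod : w (t l) ≤ ∏ j, w (t j) := by
    rw [← mul_prod_erase _ _ (mem_univ l)]
    exact le_mul_of_one_le_right (zero_le_one.trans (hw _)) (one_le_prod fun j _ => hw _)
  exact (mul_le_mul_of_nonneg_left hprod (hA i t)).trans <|
    single_le_sum (f := fun t => A i t * ∏ j, w (t j))
      (fun t _ => mul_nonneg (hA i t) (prod_nonneg fun j _ => zero_le_one.trans (hw _)))
      (mem_univ t)

end TensorAction

section PositiveTensor

variable {m n : ℕ} {B : Fin n → (Fin (m - 1) → Fin n) → ℝ}

/-- The Perron root of a positive tensor is the largest `λ` occurring here. -/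
def collatzWielandtSet (m n : ℕ) (B : Fin n → (Fin (m - 1) → Fin n) → ℝ) :
    Set (ℝ × (Fin n → ℝ)) :=
  {p | 0 ≤ p.1 ∧ (∀ i, 0 ≤ p.2 i ∧ p.2 i ≤ 1) ∧ (∃ i, p.2 i = 1) ∧
    ∀ i, p.1 * p.2 i ^ (m - 1) ≤ Ax m n B p.2 i}

lemma isCompact_collatzWielandtSet (hB : ∀ i t, 0 ≤ B i t) :
    IsCompact (collatzWielandtSet m n B) := by
  have hbound : collatzWielandtSet m n B ⊆
      Set.Icc 0 (∑ i, Ax m n B 1 i) ×ˢ Set.Icc 0 1 := by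
    rintro ⟨lam, x⟩ ⟨hlam, hx, ⟨i, hi⟩, hsub⟩
    dsimp only at hlam hx hi hsub
    refine ⟨⟨hlam, ?_⟩, fun j => (hx j).1, fun j => (hx j).2⟩
    calc lam = lam * x i ^ (m - 1) := by rw [hi, one_pow, mul_one]
      _ ≤ Ax m n B x i := hsub i
      _ ≤ Ax m n B 1 i := Ax_mono hB (fun j => (hx j).1) (fun j => (hx j).2) i
      _ ≤ ∑ j, Ax m n B 1 j :=
        single_le_sum (fun j _ => Ax_nonneg hB (x := 1) (fun _ => zero_le_one) j) (mem_univ i)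
  refine (isCompact_Icc.prod isCompact_Icc).of_isClosed_subset ?_ hbound
  have hcoord : ∀ i, Continuous fun p : ℝ × (Fin n → ℝ) => p.2 i := fun i => by fun_prop
  simp only [collatzWielandtSet, Set.ofPred_and, Set.ofPred_forall, Set.ofPred_exists]
  refine (isClosed_le continuous_const continuous_fst).inter <|
    (isClosed_iInter fun i => (isClosed_le continuous_const (hcoord i)).inter
      (isClosed_le (hcoord i) continuous_const)).inter <|
    (isClosed_iUnion_of_finite fun i => isClosed_eq (hcoord i) continuous_const).inter <|
    isClosed_iInter fun i => isClosed_le (by fun_prop) (by fun_prop)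

lemma zero_one_mem_collatzWielandtSet (hn : 0 < n) (hB : ∀ i t, 0 ≤ B i t) :
    ((0, 1) : ℝ × (Fin n → ℝ)) ∈ collatzWielandtSet m n B :=
  ⟨le_rfl, fun _ => ⟨zero_le_one, le_rfl⟩, ⟨⟨0, hn⟩, rfl⟩,
    fun i => by simpa using Ax_nonneg hB (x := 1) (fun _ => zero_le_one) i⟩

lemma exists_pos_mul_max_eq_one {y : Fin n → ℝ} {k : Fin n} (hk : 0 < y k) :
    ∃ c > 0, (∀ i, c * y i ≤ 1) ∧ ∃ i, c * y i = 1 := by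
  have : Nonempty (Fin n) := ⟨k⟩
  obtain ⟨i, hi⟩ := Finite.exists_max y
  have hpos : 0 < y i := hk.trans_le (hi k)
  refine ⟨(y i)⁻¹, inv_pos.2 hpos, fun j => ?_, i, inv_mul_cancel₀ hpos.ne'⟩
  rw [inv_mul_le_iff₀ hpos, mul_one]
  exact hi j

lemma exists_mem_collatzWielandtSet_gt {y : Fin n → ℝ} (hy : ∀ i, 0 ≤ y i) {k : Fin n}
    (hk : 0 < y k) {lam : ℝ} (hlam : 0 ≤ lam) (h : ∀ i, lam * y i ^ (m - 1) < Ax m n B y i) :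
    ∃ p ∈ collatzWielandtSet m n B, lam < p.1 := by
  have hev : ∀ᶠ μ in 𝓝[>] lam, ∀ i, μ * y i ^ (m - 1) < Ax m n B y i :=
    eventually_all.2 fun i => (((continuous_mul_const _).tendsto lam).eventually_lt_const
      (h i)).filter_mono nhdsWithin_le_nhds
  obtain ⟨μ, hμ, hlamμ⟩ := (hev.and self_mem_nhdsWithin).exists
  obtain ⟨c, hc, hc1, i, hi⟩ := exists_pos_mul_max_eq_one hk
  refine ⟨(μ, c • y), ⟨hlam.trans hlamμ.le, fun j => ⟨mul_nonneg hc.le (hy j), hc1 j⟩, ⟨i, hi⟩,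
    fun j => ?_⟩, hlamμ⟩
  calc μ * (c • y) j ^ (m - 1) = c ^ (m - 1) * (μ * y j ^ (m - 1)) := by
        rw [Pi.smul_apply, smul_eq_mul, mul_pow]; ring
    _ ≤ c ^ (m - 1) * Ax m n B y j := mul_le_mul_of_nonneg_left (hμ j).le (by positivity)
    _ = Ax m n B (c • y) j := (Ax_smul B y c j).symm

lemma exists_forall_mul_pow_lt_Ax (hm : m - 1 ≠ 0) (hB : ∀ i t, 0 < B i t) {y : Fin n → ℝ}
    (hy : ∀ i, 0 ≤ y i) {lam : ℝ} (hsub : ∀ i, lam * y i ^ (m - 1) ≤ Ax m n B y i) {k : Fin n}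
    (hk : lam * y k ^ (m - 1) < Ax m n B y k) :
    ∃ y' : Fin n → ℝ, (∀ i, 0 ≤ y' i) ∧ 0 < y' k ∧ ∀ i, lam * y' i ^ (m - 1) < Ax m n B y' i := by
  have hev : ∀ᶠ ε in 𝓝[>] (0 : ℝ), lam * (y k + ε) ^ (m - 1) < Ax m n B y k := by
    have hcont : Tendsto (fun ε : ℝ => lam * (y k + ε) ^ (m - 1)) (𝓝 0)
        (𝓝 (lam * y k ^ (m - 1))) := by
      simpa using ((by fun_prop : Continuous fun ε : ℝ => lam * (y k + ε) ^ (m - 1)).tendsto 0)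
    exact (hcont.eventually_lt_const hk).filter_mono nhdsWithin_le_nhds
  obtain ⟨ε, hε, hεpos : 0 < ε⟩ := (hev.and self_mem_nhdsWithin).exists
  set y' := Function.update y k (y k + ε)
  have hle : ∀ i, y i ≤ y' i := by
    intro i
    rcases eq_or_ne i k with rfl | hi
    · simp [y', hεpos.le]
    · simp [y', hi]
  have hlt : y k < y' k := by simp [y', hεpos]
  refine ⟨y', fun i => (hy i).trans (hle i), (hy k).trans_lt hlt, fun i => ?_⟩
  rcases eq_or_ne i k with rfl | hi
  · simpa [y'] using hε.trans_le (Ax_mono (fun i t => (hB i t).le) hy hle i)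
  · calc lam * y' i ^ (m - 1) = lam * y i ^ (m - 1) := by simp [y', hi]
      _ ≤ Ax m n B y i := hsub i
      _ < Ax m n B y' i := Ax_lt_Ax hm hB hy hle hlt i

theorem exists_eigenpair_of_pos (hm : 2 ≤ m) (hn : 0 < n) (hB : ∀ i t, 0 < B i t) :
    ∃ (ρ : ℝ) (u : Fin n → ℝ), 0 ≤ ρ ∧ (∀ i, 0 < u i ∧ u i ≤ 1) ∧ (∃ i, u i = 1) ∧
      ∀ i, Ax m n B u i = ρ * u i ^ (m - 1) := by
  have hm1 : m - 1 ≠ 0 := by omega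
  have hB0 : ∀ i t, 0 ≤ B i t := fun i t => (hB i t).le
  obtain ⟨⟨ρ, u⟩, ⟨hρ, hu, ⟨k, hk⟩, hsub⟩, hmax⟩ :=
    (isCompact_collatzWielandtSet hB0).exists_isMaxOn
      ⟨_, zero_one_mem_collatzWielandtSet (m := m) hn hB0⟩ continuous_fst.continuousOn
  dsimp only at hρ hu hk hsub
  have heq : ∀ i, Ax m n B u i = ρ * u i ^ (m - 1) := by
    by_contra! hne
    obtain ⟨i, hi⟩ := hne
    obtain ⟨y, hy, hyi, hlt⟩ := exists_forall_mul_pow_lt_Ax hm1 hB (fun j => (hu j).1) hsub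
      ((hsub i).lt_of_ne' hi)
    obtain ⟨p, hp, hρp⟩ := exists_mem_collatzWielandtSet_gt hy hyi hρ hlt
    exact (hmax hp).not_gt hρp
  refine ⟨ρ, u, hρ, fun i => ⟨(hu i).1.lt_of_ne fun h => ?_, (hu i).2⟩, ⟨k, hk⟩, heq⟩
  have hpos := Ax_pos hm1 hB (fun j => (hu j).1) (hk ▸ one_pos : 0 < u k) i
  rw [heq i, ← h, zero_pow hm1, mul_zero] at hpos
  exact hpos.false

end PositiveTensor

theorem Relation.ReflTransGen.exists_bound {α β : Type*} [Preorder β] {r : α → α → Prop}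
    {f : β → β} (hf : Monotone f) {a b : α} (hab : Relation.ReflTransGen r a b) (c : β) :
    ∃ C, ∀ w : α → β, (∀ i j, r i j → w j ≤ f (w i)) → w a ≤ c → w b ≤ C := by
  induction hab with
  | refl => exact ⟨c, fun _ _ h => h⟩
  | tail _ hbc ih =>
    obtain ⟨C, hC⟩ := ih
    exact ⟨f C, fun w hw ha => (hw _ _ hbc).trans (hf (hC w hw ha))⟩

section WeaklyIrreducible

variable {m n : ℕ} {A : Fin n → (Fin (m - 1) → Fin n) → ℝ}

/-- Along an arc `i → j` of `G_A` through an entry `a_{i t} > 0`, `w_j ≤ (R / a_{i t}) w_i^{m-1}`;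
iterate this along paths. -/
theorem exists_bound_of_stronglyConnected (hA : ∀ i t, 0 ≤ A i t)
    (hirr : StronglyConnected (tArc m n A)) (R : ℝ) :
    ∃ C, ∀ w : Fin n → ℝ, (∀ i, 1 ≤ w i) → (∀ i, Ax m n A w i ≤ R * w i ^ (m - 1)) →
      ∀ a b, w a ≤ 1 → w b ≤ C := by
  obtain ⟨K, hK0, hK⟩ := (Set.finite_range fun q : Fin n × (Fin (m - 1) → Fin n) =>
    R / A q.1 q.2).bddAbove.exists_ge 0
  set f : ℝ → ℝ := fun s => K * max s 1 ^ (m - 1)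
  have hf : Monotone f := fun s s' h =>
    mul_le_mul_of_nonneg_left (pow_le_pow_left₀ (by positivity) (max_le_max_right 1 h) _) hK0
  have hstep : ∀ w : Fin n → ℝ, (∀ i, 1 ≤ w i) → (∀ i, Ax m n A w i ≤ R * w i ^ (m - 1)) →
      ∀ i j, tArc m n A i j → w j ≤ f (w i) := by
    rintro w hw hR i _ ⟨t, ht, l, rfl⟩
    have hpos : 0 < A i t := (hA i t).lt_of_ne' ht
    calc w (t l) ≤ R / A i t * w i ^ (m - 1) := by
          rw [div_mul_eq_mul_div, le_div_iff₀ hpos, mul_comm]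
          exact (mul_le_Ax_of_one_le hA hw i t l).trans (hR i)
      _ ≤ f (w i) := by
          simp only [f, max_eq_left (hw i)]
          exact mul_le_mul_of_nonneg_right (hK _ ⟨(i, t), rfl⟩)
            (pow_nonneg (zero_le_one.trans (hw i)) _)
  choose C hC using fun a b => (hirr a b).exists_bound hf 1
  obtain ⟨D, hD⟩ := (Set.finite_range fun q : Fin n × Fin n => C q.1 q.2).bddAbove
  exact ⟨D, fun w hw hR a b ha => (hC a b w (hstep w hw hR) ha).trans (hD ⟨(a, b), rfl⟩)⟩

theorem exists_lower_bound_of_stronglyConnected (hA : ∀ i t, 0 ≤ A i t)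
    (hirr : StronglyConnected (tArc m n A)) (R : ℝ) :
    ∃ δ > 0, ∀ u : Fin n → ℝ, (∀ i, 0 < u i) → (∃ i, u i = 1) →
      (∀ i, Ax m n A u i ≤ R * u i ^ (m - 1)) → ∀ i, δ ≤ u i := by
  obtain ⟨C, hC⟩ := exists_bound_of_stronglyConnected hA hirr R
  refine ⟨(max C 1)⁻¹, by positivity, fun u hu ⟨k, hk⟩ hR i => ?_⟩
  have : Nonempty (Fin n) := ⟨i⟩
  obtain ⟨v, hv⟩ := Finite.exists_min u
  have hw : ∀ j, 1 ≤ ((u v)⁻¹ • u) j := fun j => by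
    rw [Pi.smul_apply, smul_eq_mul, le_inv_mul_iff₀ (hu v), mul_one]
    exact hv j
  have hwR : ∀ j, Ax m n A ((u v)⁻¹ • u) j ≤ R * ((u v)⁻¹ • u) j ^ (m - 1) := fun j => by
    rw [Ax_smul, Pi.smul_apply, smul_eq_mul, mul_pow, mul_left_comm]
    exact mul_le_mul_of_nonneg_left (hR j) (by have := hu v; positivity)
  have hCk := hC _ hw hwR v k (by simp [(hu v).ne'])
  rw [Pi.smul_apply, smul_eq_mul, hk, mul_one] at hCk
  calc (max C 1)⁻¹ ≤ ((u v)⁻¹)⁻¹ := inv_anti₀ (by have := hu v; positivity)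
        (hCk.trans (le_max_left _ _))
    _ = u v := inv_inv _
    _ ≤ u i := hv i

lemma exists_fst_eq_zero_of_Ioc_subset {X : Type*} [TopologicalSpace X] {K : Set (ℝ × X)}
    (hK : IsCompact K) (h : Set.Ioc 0 1 ⊆ Prod.fst '' K) : ∃ x, ((0 : ℝ), x) ∈ K := by
  have h0 : (0 : ℝ) ∈ Prod.fst '' K := by
    have := closure_mono h
    rw [closure_Ioc zero_ne_one, (hK.image continuous_fst).isClosed.closure_eq] at this
    exact this ⟨le_rfl, zero_le_one⟩
  obtain ⟨⟨_, x⟩, hx, rfl⟩ := h0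
  exact ⟨x, hx⟩

lemma exists_eigenpair_add_const (hm : 2 ≤ m) (hn : 0 < n) (hA : ∀ i t, 0 ≤ A i t) {ε : ℝ}
    (hε : 0 < ε) (hε1 : ε ≤ 1) :
    ∃ (ρ : ℝ) (u : Fin n → ℝ), 0 ≤ ρ ∧ ρ ≤ ∑ i, Ax m n (fun i t => A i t + 1) 1 i ∧
      (∀ i, 0 < u i ∧ u i ≤ 1) ∧ (∃ i, u i = 1) ∧
      ∀ i, Ax m n (fun i t => A i t + ε) u i = ρ * u i ^ (m - 1) := by
  have hB : ∀ i t, 0 < A i t + ε := fun i t => add_pos_of_nonneg_of_pos (hA i t) hε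
  obtain ⟨ρ, u, hρ, hu, ⟨k, hk⟩, heq⟩ := exists_eigenpair_of_pos hm hn hB
  refine ⟨ρ, u, hρ, ?_, hu, ⟨k, hk⟩, heq⟩
  calc ρ = Ax m n (fun i t => A i t + ε) u k := by rw [heq, hk, one_pow, mul_one]
    _ ≤ Ax m n (fun i t => A i t + 1) 1 k :=
      (Ax_mono (fun i t => (hB i t).le) (fun i => (hu i).1.le) (fun i => (hu i).2) k).trans
        (Ax_mono_tensor (fun i t => by linarith) (fun _ => zero_le_one) k)
    _ ≤ ∑ i, Ax m n (fun i t => A i t + 1) 1 i :=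
      single_le_sum (f := fun i => Ax m n (fun i t => A i t + 1) 1 i)
        (fun i _ => Ax_nonneg (fun i t => by linarith [hA i t]) (fun _ => zero_le_one) i)
        (mem_univ k)

theorem exists_pos_eigenpair (hm : 2 ≤ m) (hn : 0 < n) (hA : ∀ i t, 0 ≤ A i t)
    (hirr : StronglyConnected (tArc m n A)) :
    ∃ (ρ : ℝ) (u : Fin n → ℝ), 0 ≤ ρ ∧ (∀ i, 0 < u i) ∧ ∀ i, Ax m n A u i = ρ * u i ^ (m - 1) := by
  set R := ∑ i, Ax m n (fun i t => A i t + 1) 1 i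
  obtain ⟨δ, hδ, hlow⟩ := exists_lower_bound_of_stronglyConnected hA hirr R
  set K : Set (ℝ × ℝ × (Fin n → ℝ)) :=
    (Set.Icc 0 1 ×ˢ Set.Icc 0 R ×ˢ Set.Icc (fun _ : Fin n => δ) 1) ∩
      {q | ∀ i, Ax m n A q.2.2 i + q.1 * (∑ j, q.2.2 j) ^ (m - 1) = q.2.1 * q.2.2 i ^ (m - 1)}
  have hK : IsCompact K := by
    refine (isCompact_Icc.prod (isCompact_Icc.prod isCompact_Icc)).inter_right ?_
    rw [Set.ofPred_forall]
    exact isClosed_iInter fun i => isClosed_eq (by fun_prop) (by fun_prop)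
  have hsub : Set.Ioc 0 1 ⊆ Prod.fst '' K := by
    rintro ε ⟨hε, hε1⟩
    obtain ⟨ρ, u, hρ, hρR, hu, hk, heq⟩ := exists_eigenpair_add_const hm hn hA hε hε1
    have hAu : ∀ i, Ax m n A u i ≤ R * u i ^ (m - 1) := fun i => calc
      Ax m n A u i ≤ Ax m n (fun i t => A i t + ε) u i :=
        Ax_mono_tensor (fun i t => le_add_of_nonneg_right hε.le) (fun i => (hu i).1.le) i
      _ = ρ * u i ^ (m - 1) := heq i
      _ ≤ R * u i ^ (m - 1) := mul_le_mul_of_nonneg_right hρR (pow_nonneg (hu i).1.le _)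
    refine ⟨(ε, ρ, u), ⟨⟨⟨hε.le, hε1⟩, ⟨hρ, hρR⟩, fun i => hlow u (fun i => (hu i).1) hk hAu i,
      fun i => (hu i).2⟩, fun i => ?_⟩, rfl⟩
    rw [← Ax_add_const, heq]
  obtain ⟨⟨ρ, u⟩, ⟨-, ⟨hρ, -⟩, ⟨hu, -⟩⟩, heq⟩ := exists_fst_eq_zero_of_Ioc_subset hK hsub
  exact ⟨ρ, u, hρ, fun i => hδ.trans_le (hu i), fun i => by simpa using heq i⟩

end WeaklyIrreducible

section SpectralRadius

variable {m n : ℕ} {A : Fin n → (Fin (m - 1) → Fin n) → ℝ} {ρ : ℝ} {u : Fin n → ℝ}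

-- Scale `u` until it touches `y` from above.
lemma le_of_mul_pow_le_Ax (hA : ∀ i t, 0 ≤ A i t) (hu : ∀ i, 0 < u i)
    (hequ : ∀ i, Ax m n A u i = ρ * u i ^ (m - 1)) {y : Fin n → ℝ} (hy : ∀ i, 0 ≤ y i)
    {k : Fin n} (hk : 0 < y k) {lam : ℝ} (h : ∀ i, lam * y i ^ (m - 1) ≤ Ax m n A y i) :
    lam ≤ ρ := by
  have : Nonempty (Fin n) := ⟨k⟩
  obtain ⟨i, hi⟩ := Finite.exists_max fun j => y j / u j
  set c := y i / u i
  have hyc : ∀ j, y j ≤ (c • u) j := fun j => (div_le_iff₀ (hu j)).1 (hi j)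
  have hyi : y i = c * u i := (div_mul_cancel₀ _ (hu i).ne').symm
  have hyi_pos : 0 < y i := by
    rw [hyi]
    exact mul_pos ((div_pos hk (hu k)).trans_le (hi k)) (hu i)
  refine le_of_mul_le_mul_right ?_ (pow_pos hyi_pos (m - 1))
  calc lam * y i ^ (m - 1) ≤ Ax m n A y i := h i
    _ ≤ Ax m n A (c • u) i := Ax_mono hA hy hyc i
    _ = ρ * y i ^ (m - 1) := by rw [Ax_smul, hequ, hyi, mul_pow]; ring

theorem specRad_eq_of_pos_eigenpair (hn : 0 < n) (hA : ∀ i t, 0 ≤ A i t) (hρ : 0 ≤ ρ)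
    (hu : ∀ i, 0 < u i) (hequ : ∀ i, Ax m n A u i = ρ * u i ^ (m - 1)) :
    specRad m n A = ρ := by
  refine IsGreatest.csSup_eq ⟨⟨ρ, ⟨fun i => (u i : ℂ), fun h => ?_, fun i => ?_⟩, ?_⟩, ?_⟩
  · simpa [(hu ⟨0, hn⟩).ne'] using congrFun h ⟨0, hn⟩
  · simpa [Ax] using congrArg (fun r : ℝ => (r : ℂ)) (hequ i)
  · simp [hρ]
  · rintro _ ⟨lam, ⟨x, hx, hxeq⟩, rfl⟩
    obtain ⟨k, hk⟩ := Function.ne_iff.1 hx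
    refine le_of_mul_pow_le_Ax hA hu hequ (fun i => norm_nonneg (x i)) (norm_pos_iff.2 hk)
      fun i => ?_
    calc ‖lam‖ * ‖x i‖ ^ (m - 1) = ‖∑ t, (A i t : ℂ) * ∏ j, x (t j)‖ := by
          rw [hxeq, norm_mul, norm_pow]
      _ ≤ ∑ t, ‖(A i t : ℂ) * ∏ j, x (t j)‖ := norm_sum_le _ _
      _ = Ax m n A (fun j => ‖x j‖) i := by
          simp only [Ax, norm_mul, norm_prod, Complex.norm_of_nonneg (hA i _)]

end SpectralRadius

lemma Function.exists_iterate_eq_self {α : Type*} [Finite α] [Nonempty α] (σ : α → α) :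
    ∃ i p, 0 < p ∧ σ^[p] i = i := by
  obtain ⟨i⟩ := ‹Nonempty α›
  obtain ⟨a, b, hab, heq⟩ := Finite.exists_ne_map_eq_of_infinite fun k : ℕ => σ^[k] i
  wlog h : a < b generalizing a b
  · exact this b a hab.symm heq.symm (by omega)
  refine ⟨σ^[a] i, b - a, by omega, ?_⟩
  rw [← Function.iterate_add_apply, Nat.sub_add_cancel h.le]
  exact heq.symm

lemma prod_range_iterate_succ {α M : Type*} [CommMonoid M] (g : α → M) {σ : α → α} {i : α}
    {p : ℕ} (hp : σ^[p] i = i) :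
    ∏ j ∈ range p, g (σ^[j + 1] i) = ∏ j ∈ range p, g (σ^[j] i) := by
  cases p with
  | zero => rfl
  | succ p => rw [prod_range_succ, hp, prod_range_succ', Function.iterate_zero_apply]

section Circuits

variable {n : ℕ} {arc : Fin n → Fin n → Prop} {σ : Fin n → Fin n}

lemma isCircuit_iterate (hσ : ∀ i, arc i (σ i)) {p : ℕ} (hp : 0 < p) {i : Fin n}
    (hper : σ^[p] i = i) : IsCircuit arc p fun j => σ^[j] i :=
  ⟨hp, hper, fun j _ => by dsimp only; rw [Function.iterate_succ_apply']; exact hσ _⟩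

lemma exists_isCircuit_pow_le_prod (hn : 0 < n) (hσ : ∀ i, arc i (σ i)) {c : ℝ} (hc : 0 ≤ c)
    {f z : Fin n → ℝ} (hz : ∀ i, 0 < z i) (h : ∀ i, c * z (σ i) ≤ f i * z i) :
    ∃ p γ, IsCircuit arc p γ ∧ c ^ p ≤ ∏ j ∈ range p, f (γ j) := by
  have : Nonempty (Fin n) := ⟨⟨0, hn⟩⟩
  obtain ⟨i, p, hp, hper⟩ := Function.exists_iterate_eq_self σ
  refine ⟨p, _, isCircuit_iterate hσ hp hper, le_of_mul_le_mul_right ?_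
    (prod_pos (s := range p) fun j _ => hz (σ^[j] i))⟩
  calc c ^ p * ∏ j ∈ range p, z (σ^[j] i) = ∏ j ∈ range p, c * z (σ (σ^[j] i)) := by
        simp_rw [← Function.iterate_succ_apply' σ]
        rw [prod_mul_distrib, prod_const, card_range, prod_range_iterate_succ z hper]
    _ ≤ ∏ j ∈ range p, f (σ^[j] i) * z (σ^[j] i) :=
        prod_le_prod (fun j _ => mul_nonneg hc (hz _).le) fun j _ => h _
    _ = (∏ j ∈ range p, f (σ^[j] i)) * ∏ j ∈ range p, z (σ^[j] i) := prod_mul_distrib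

lemma exists_isCircuit_prod_le_pow (hn : 0 < n) (hσ : ∀ i, arc i (σ i)) {c : ℝ}
    {f z : Fin n → ℝ} (hf : ∀ i, 0 ≤ f i) (hz : ∀ i, 0 < z i) (h : ∀ i, f i * z i ≤ c * z (σ i)) :
    ∃ p γ, IsCircuit arc p γ ∧ ∏ j ∈ range p, f (γ j) ≤ c ^ p := by
  have : Nonempty (Fin n) := ⟨⟨0, hn⟩⟩
  obtain ⟨i, p, hp, hper⟩ := Function.exists_iterate_eq_self σ
  refine ⟨p, _, isCircuit_iterate hσ hp hper, le_of_mul_le_mul_right ?_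
    (prod_pos (s := range p) fun j _ => hz (σ^[j] i))⟩
  calc (∏ j ∈ range p, f (σ^[j] i)) * ∏ j ∈ range p, z (σ^[j] i)
      = ∏ j ∈ range p, f (σ^[j] i) * z (σ^[j] i) := prod_mul_distrib.symm
    _ ≤ ∏ j ∈ range p, c * z (σ (σ^[j] i)) :=
        prod_le_prod (fun j _ => mul_nonneg (hf _) (hz _).le) fun j _ => h _
    _ = c ^ p * ∏ j ∈ range p, z (σ^[j] i) := by
        simp_rw [← Function.iterate_succ_apply' σ]
        rw [prod_mul_distrib, prod_const, card_range, prod_range_iterate_succ z hper]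

end Circuits

section CircuitMeans

variable {m n : ℕ} {A : Fin n → (Fin (m - 1) → Fin n) → ℝ} {ρ : ℝ} {u x : Fin n → ℝ}

def circuitMeans (m n : ℕ) (A : Fin n → (Fin (m - 1) → Fin n) → ℝ) (x : Fin n → ℝ) : Set ℝ :=
  {s | ∃ (p : ℕ) (γ : ℕ → Fin n), IsCircuit (tArc m n A) p γ ∧
    s = (∏ j ∈ range p, Ax m n A x (γ j) / x (γ j) ^ (m - 1)) ^ ((p : ℝ)⁻¹)}

lemma Ax_div_pow_nonneg (hA : ∀ i t, 0 ≤ A i t) (hx : ∀ i, 0 < x i) (i : Fin n) :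
    0 ≤ Ax m n A x i / x i ^ (m - 1) :=
  div_nonneg (Ax_nonneg hA (fun j => (hx j).le) i) (pow_nonneg (hx i).le _)

lemma Ax_div_pow_mul (hx : ∀ i, 0 < x i) (hu : ∀ i, 0 < u i) (i : Fin n) :
    Ax m n A x i / x i ^ (m - 1) * (x i / u i) ^ (m - 1) = Ax m n A x i / u i ^ (m - 1) := by
  have := hx i
  have := hu i
  rw [div_pow]
  field_simp

lemma exists_isCircuit_pow_le_prod_Ax_div_pow (hn : 0 < n) (hA : ∀ i t, 0 ≤ A i t)
    (hout : ∀ i, ∃ j, tArc m n A i j) (hρ : 0 ≤ ρ) (hu : ∀ i, 0 < u i)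
    (hequ : ∀ i, Ax m n A u i = ρ * u i ^ (m - 1)) (hx : ∀ i, 0 < x i) :
    ∃ p γ, IsCircuit (tArc m n A) p γ ∧
      ρ ^ p ≤ ∏ j ∈ range p, Ax m n A x (γ j) / x (γ j) ^ (m - 1) := by
  choose σ hσ hσmin using fun i => Set.exists_min_image {j | tArc m n A i j}
    (fun j => x j / u j) (Set.toFinite _) (hout i)
  refine exists_isCircuit_pow_le_prod (arc := tArc m n A)
    (f := fun i => Ax m n A x i / x i ^ (m - 1)) hn hσ hρ (z := fun i => (x i / u i) ^ (m - 1))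
    (fun i => pow_pos (div_pos (hx i) (hu i)) _) fun i => ?_
  have hle : Ax m n A ((x (σ i) / u (σ i)) • u) i ≤ Ax m n A x i :=
    Ax_le_Ax_of_forall_tArc hA fun j hj =>
      ⟨mul_nonneg (div_pos (hx _) (hu _)).le (hu j).le, (le_div_iff₀ (hu j)).1 (hσmin i j hj)⟩
  rw [Ax_smul, hequ] at hle
  rw [Ax_div_pow_mul hx hu, le_div_iff₀ (pow_pos (hu i) _)]
  linarith

lemma exists_isCircuit_prod_Ax_div_pow_le_pow (hn : 0 < n) (hA : ∀ i t, 0 ≤ A i t)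
    (hout : ∀ i, ∃ j, tArc m n A i j) (hu : ∀ i, 0 < u i)
    (hequ : ∀ i, Ax m n A u i = ρ * u i ^ (m - 1)) (hx : ∀ i, 0 < x i) :
    ∃ p γ, IsCircuit (tArc m n A) p γ ∧
      ∏ j ∈ range p, Ax m n A x (γ j) / x (γ j) ^ (m - 1) ≤ ρ ^ p := by
  choose σ hσ hσmax using fun i => Set.exists_max_image {j | tArc m n A i j}
    (fun j => x j / u j) (Set.toFinite _) (hout i)
  refine exists_isCircuit_prod_le_pow (arc := tArc m n A) hn hσ (Ax_div_pow_nonneg hA hx)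
    (z := fun i => (x i / u i) ^ (m - 1)) (fun i => pow_pos (div_pos (hx i) (hu i)) _)
    fun i => ?_
  have hle : Ax m n A x i ≤ Ax m n A ((x (σ i) / u (σ i)) • u) i :=
    Ax_le_Ax_of_forall_tArc hA fun j hj =>
      ⟨(hx j).le, (div_le_iff₀ (hu j)).1 (hσmax i j hj)⟩
  rw [Ax_smul, hequ] at hle
  rw [Ax_div_pow_mul hx hu, div_le_iff₀ (pow_pos (hu i) _)]
  linarith

lemma bddAbove_circuitMeans (hA : ∀ i t, 0 ≤ A i t) (hx : ∀ i, 0 < x i) :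
    BddAbove (circuitMeans m n A x) := by
  set M := ∑ i, Ax m n A x i / x i ^ (m - 1)
  have hM : ∀ i, Ax m n A x i / x i ^ (m - 1) ≤ M := fun i =>
    single_le_sum (f := fun i => Ax m n A x i / x i ^ (m - 1))
      (fun i _ => Ax_div_pow_nonneg hA hx i) (mem_univ i)
  refine ⟨M, ?_⟩
  rintro _ ⟨p, γ, ⟨hp, -⟩, rfl⟩
  rw [Real.rpow_inv_le_iff_of_pos (prod_nonneg fun j _ => Ax_div_pow_nonneg hA hx _)
    (sum_nonneg fun i _ => Ax_div_pow_nonneg hA hx i) (by positivity), Real.rpow_natCast]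
  exact (prod_le_prod (fun j _ => Ax_div_pow_nonneg hA hx _) fun j _ => hM _).trans
    (by rw [prod_const, card_range])

lemma nonneg_of_mem_circuitMeans (hA : ∀ i t, 0 ≤ A i t) (hx : ∀ i, 0 < x i) {s : ℝ}
    (hs : s ∈ circuitMeans m n A x) : 0 ≤ s := by
  obtain ⟨p, γ, -, rfl⟩ := hs
  exact Real.rpow_nonneg (prod_nonneg fun j _ => Ax_div_pow_nonneg hA hx _) _

lemma circuitMeans_eq_singleton (hn : 0 < n) (hA : ∀ i t, 0 ≤ A i t)
    (hout : ∀ i, ∃ j, tArc m n A i j) (hρ : 0 ≤ ρ) (hu : ∀ i, 0 < u i)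
    (hequ : ∀ i, Ax m n A u i = ρ * u i ^ (m - 1)) : circuitMeans m n A u = {ρ} := by
  have hmean : ∀ (p : ℕ) (γ : ℕ → Fin n), 0 < p →
      (∏ j ∈ range p, Ax m n A u (γ j) / u (γ j) ^ (m - 1)) ^ ((p : ℝ)⁻¹) = ρ := fun p γ hp => by
    simp_rw [hequ, mul_div_assoc, div_self (pow_pos (hu _) _).ne', mul_one, prod_const,
      card_range]
    exact Real.pow_rpow_inv_natCast hρ hp.ne'
  refine Set.eq_singleton_iff_unique_mem.2 ⟨?_, ?_⟩
  · obtain ⟨p, γ, hγ, -⟩ := exists_isCircuit_pow_le_prod_Ax_div_pow hn hA hout hρ hu hequ hu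
    exact ⟨p, γ, hγ, (hmean p γ hγ.1).symm⟩
  · rintro _ ⟨p, γ, hγ, rfl⟩
    exact hmean p γ hγ.1

theorem isLeast_sSup_circuitMeans (hn : 0 < n) (hA : ∀ i t, 0 ≤ A i t)
    (hout : ∀ i, ∃ j, tArc m n A i j) (hρ : 0 ≤ ρ) (hu : ∀ i, 0 < u i)
    (hequ : ∀ i, Ax m n A u i = ρ * u i ^ (m - 1)) :
    IsLeast {r | ∃ x : Fin n → ℝ, (∀ i, 0 < x i) ∧ r = sSup (circuitMeans m n A x)} ρ := by
  refine ⟨⟨u, hu, by rw [circuitMeans_eq_singleton hn hA hout hρ hu hequ, csSup_singleton]⟩, ?_⟩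
  rintro _ ⟨x, hx, rfl⟩
  obtain ⟨p, γ, hγ, hle⟩ := exists_isCircuit_pow_le_prod_Ax_div_pow hn hA hout hρ hu hequ hx
  refine le_csSup_of_le (bddAbove_circuitMeans hA hx) ⟨p, γ, hγ, rfl⟩ ?_
  rwa [Real.le_rpow_inv_iff_of_pos hρ (prod_nonneg fun j _ => Ax_div_pow_nonneg hA hx _)
    (by exact_mod_cast hγ.1), Real.rpow_natCast]

theorem isGreatest_sInf_circuitMeans (hn : 0 < n) (hA : ∀ i t, 0 ≤ A i t)
    (hout : ∀ i, ∃ j, tArc m n A i j) (hρ : 0 ≤ ρ) (hu : ∀ i, 0 < u i)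
    (hequ : ∀ i, Ax m n A u i = ρ * u i ^ (m - 1)) :
    IsGreatest {r | ∃ x : Fin n → ℝ, (∀ i, 0 < x i) ∧ r = sInf (circuitMeans m n A x)} ρ := by
  refine ⟨⟨u, hu, by rw [circuitMeans_eq_singleton hn hA hout hρ hu hequ, csInf_singleton]⟩, ?_⟩
  rintro _ ⟨x, hx, rfl⟩
  obtain ⟨p, γ, hγ, hle⟩ := exists_isCircuit_prod_Ax_div_pow_le_pow hn hA hout hu hequ hx
  refine csInf_le_of_le ⟨0, fun _ => nonneg_of_mem_circuitMeans hA hx⟩ ⟨p, γ, hγ, rfl⟩ ?_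
  rwa [Real.rpow_inv_le_iff_of_pos (prod_nonneg fun j _ => Ax_div_pow_nonneg hA hx _) hρ
    (by exact_mod_cast hγ.1), Real.rpow_natCast]

lemma StronglyConnected.forall_not_of_not_forall_exists {arc : Fin n → Fin n → Prop}
    (hirr : StronglyConnected arc) (h : ¬ ∀ i, ∃ j, arc i j) : ∀ i j, ¬ arc i j := by
  obtain ⟨i₀, hi₀⟩ := not_forall.1 h
  intro i j hij
  rcases (hirr i₀ i).cases_head with rfl | ⟨k, hk, -⟩
  · exact hi₀ ⟨j, hij⟩
  · exact hi₀ ⟨k, hk⟩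

lemma eq_zero_of_forall_not_tArc (hm : 2 ≤ m) (hn : 0 < n) (hno : ∀ i j, ¬ tArc m n A i j)
    (hu : ∀ i, 0 < u i) (hequ : ∀ i, Ax m n A u i = ρ * u i ^ (m - 1)) : ρ = 0 := by
  have hA0 : ∀ i t, A i t = 0 := fun i t => by
    by_contra h
    exact hno i (t ⟨0, by omega⟩) ⟨t, h, _, rfl⟩
  have h0 := hequ ⟨0, hn⟩
  simp only [Ax, hA0, zero_mul, sum_const_zero] at h0
  exact (mul_eq_zero.1 h0.symm).resolve_right (pow_pos (hu _) _).ne'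

lemma circuitMeans_eq_empty (hno : ∀ i j, ¬ tArc m n A i j) : circuitMeans m n A x = ∅ :=
  Set.eq_empty_iff_forall_notMem.2 fun _ ⟨_, _, ⟨hp, _, harc⟩, _⟩ => hno _ _ (harc 0 hp)

end CircuitMeans

theorem stmt6 (m n : ℕ) (hm : 2 ≤ m) (hn : 0 < n)
    (A : Fin n → (Fin (m - 1) → Fin n) → ℝ) (hA : ∀ i t, 0 ≤ A i t)
    (hirr : StronglyConnected (tArc m n A)) :
    specRad m n A = sInf {r : ℝ | ∃ x : Fin n → ℝ, (∀ i, 0 < x i) ∧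
        r = sSup {s : ℝ | ∃ (p : ℕ) (γ : ℕ → Fin n), IsCircuit (tArc m n A) p γ ∧
          s = (∏ j ∈ Finset.range p, Ax m n A x (γ j) / x (γ j) ^ (m - 1)) ^ ((p : ℝ)⁻¹)}} ∧
    specRad m n A = sSup {r : ℝ | ∃ x : Fin n → ℝ, (∀ i, 0 < x i) ∧
        r = sInf {s : ℝ | ∃ (p : ℕ) (γ : ℕ → Fin n), IsCircuit (tArc m n A) p γ ∧
          s = (∏ j ∈ Finset.range p, Ax m n A x (γ j) / x (γ j) ^ (m - 1)) ^ ((p : ℝ)⁻¹)}} := by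
  obtain ⟨ρ, u, hρ, hu, hequ⟩ := exists_pos_eigenpair hm hn hA hirr
  rw [specRad_eq_of_pos_eigenpair hn hA hρ hu hequ]
  change ρ = sInf {r | ∃ x : Fin n → ℝ, (∀ i, 0 < x i) ∧ r = sSup (circuitMeans m n A x)} ∧
    ρ = sSup {r | ∃ x : Fin n → ℝ, (∀ i, 0 < x i) ∧ r = sInf (circuitMeans m n A x)}
  by_cases hout : ∀ i, ∃ j, tArc m n A i j
  · exact ⟨(isLeast_sSup_circuitMeans hn hA hout hρ hu hequ).csInf_eq.symm,
      (isGreatest_sInf_circuitMeans hn hA hout hρ hu hequ).csSup_eq.symm⟩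
  -- Here `n = 1` and `A = 0`: no circuit exists, and `sSup ∅ = sInf ∅ = 0 = ρ`.
  have hno := hirr.forall_not_of_not_forall_exists hout
  have hconst : {r : ℝ | ∃ x : Fin n → ℝ, (∀ i, 0 < x i) ∧ r = 0} = {0} :=
    Set.eq_singleton_iff_unique_mem.2 ⟨⟨1, fun _ => one_pos, rfl⟩, fun _ ⟨_, _, hr⟩ => hr⟩
  simp only [circuitMeans_eq_empty hno, Real.sSup_empty, Real.sInf_empty, hconst,
    csInf_singleton, csSup_singleton, eq_zero_of_forall_not_tArc hm hn hno hu hequ, and_self]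
end

section
/- Let H be a connected k-uniform hypergraph with n vertices and vertex degrees d_1,...,d_n. Then min over circuits gamma in the digraph of the adjacency tensor A_H of (prod_{i in gamma} d_i)^{1/|gamma|} <= rho(A_H) <= max over circuits gamma of (prod_{i in gamma} d_i)^{1/|gamma|}. -/
open scoped BigOperators
open Finset

/-- The degree of vertex `i` in the hypergraph with edge set `E`. -/
def deg (n : ℕ) (E : Finset (Finset (Fin n))) (i : Fin n) : ℕ :=
  (E.filter (fun e => i ∈ e)).card

/-- The adjacency tensor of a `k`-uniform hypergraph with edge set `E`:
    entry `1/(k-1)!` when the indices form an edge, `0` otherwise. -/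
noncomputable def adjT (k n : ℕ) (E : Finset (Finset (Fin n))) :
    Fin n → (Fin (k - 1) → Fin n) → ℝ :=
  fun i t =>
    if insert i (Finset.image t Finset.univ) ∈ E then 1 / (Nat.factorial (k - 1) : ℝ) else 0

/-- The signless Laplacian tensor `Q = D + A` of a `k`-uniform hypergraph. -/
noncomputable def qT (k n : ℕ) (E : Finset (Finset (Fin n))) :
    Fin n → (Fin (k - 1) → Fin n) → ℝ :=
  fun i t => (if ∀ j, t j = i then (deg n E i : ℝ) else 0) + adjT k n E i t

/-- The hypergraph with edge set `E` is connected. -/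
def HConnected (n : ℕ) (E : Finset (Finset (Fin n))) : Prop :=
  ∀ i j : Fin n, Relation.ReflTransGen (fun u v => ∃ e ∈ E, u ∈ e ∧ v ∈ e) i j


/-!
Upper bound: given an eigenpair `(μ, x)`, send each vertex `i` with `x_i ≠ 0` along an arc to a
coordinate of largest modulus. The eigen-equation gives `‖μ‖ ‖x_i‖^(k-1) ≤ d_i ‖x_j‖^(k-1)` at
each step, and on the circuit that the orbit eventually enters these inequalities multiply to
`‖μ‖^p ≤ ∏ d_i`. Lower bound: a positive eigenvector for an eigenvalue `λ > 0` gives, by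
following arcs to least coordinates, a circuit with `∏ d_i ≤ λ^p`. Such a Perron pair comes from
maximizing `∑_{e ∈ E} ∏_{v ∈ e} y_v` on the nonnegative part of the unit `ℓ^k` sphere: by
connectedness the maximizer is positive, and the Lagrange condition is the eigen-equation.
-/

open Filter Topology
open scoped Nat

namespace IsCircuit

variable {n : ℕ} {arc : Fin n → Fin n → Prop} {p : ℕ} {γ : ℕ → Fin n}

lemma mono {arc' : Fin n → Fin n → Prop} (h : ∀ i j, arc i j → arc' i j)
    (hγ : IsCircuit arc p γ) : IsCircuit arc' p γ :=
  ⟨hγ.1, hγ.2.1, fun j hj => h _ _ (hγ.2.2 j hj)⟩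

lemma prod_comp_succ_eq {M : Type*} [CommMonoid M] (hγ : IsCircuit arc p γ) (f : Fin n → M) :
    ∏ j ∈ range p, f (γ (j + 1)) = ∏ j ∈ range p, f (γ j) := by
  obtain ⟨q, rfl⟩ := Nat.exists_eq_succ_of_ne_zero hγ.1.ne'
  rw [prod_range_succ, prod_range_succ', hγ.2.1, mul_comm]

lemma pow_le_prod {d w : Fin n → ℝ} {c : ℝ} (hc : 0 ≤ c) (hw : ∀ j, 0 < w (γ j))
    (hγ : IsCircuit (fun i j => c * w i ≤ d i * w j) p γ) :
    c ^ p ≤ ∏ j ∈ range p, d (γ j) := by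
  have h : ∏ j ∈ range p, (c * w (γ j)) ≤ ∏ j ∈ range p, (d (γ j) * w (γ (j + 1))) :=
    prod_le_prod (fun j _ => mul_nonneg hc (hw j).le) fun j hj => hγ.2.2 j (mem_range.1 hj)
  rw [prod_mul_distrib, prod_mul_distrib, prod_const, card_range, hγ.prod_comp_succ_eq] at h
  exact le_of_mul_le_mul_right h (prod_pos fun j _ => hw j)

lemma prod_le_pow {d w : Fin n → ℝ} {c : ℝ} (hd : 0 ≤ d) (hw : ∀ j, 0 < w (γ j))
    (hγ : IsCircuit (fun i j => d i * w j ≤ c * w i) p γ) :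
    ∏ j ∈ range p, d (γ j) ≤ c ^ p := by
  have h : ∏ j ∈ range p, (d (γ j) * w (γ (j + 1))) ≤ ∏ j ∈ range p, (c * w (γ j)) :=
    prod_le_prod (fun j _ => mul_nonneg (hd _) (hw (j + 1)).le)
      fun j hj => hγ.2.2 j (mem_range.1 hj)
  rw [prod_mul_distrib, prod_mul_distrib, prod_const, card_range, hγ.prod_comp_succ_eq] at h
  exact le_of_mul_le_mul_right h (prod_pos fun j _ => hw j)

end IsCircuit

/-- The circuit is the periodic part of the orbit of a successor function staying in `P`. -/
lemma exists_isCircuit_of_forall_exists {n : ℕ} {rel : Fin n → Fin n → Prop}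
    {P : Fin n → Prop} (h : ∀ i, P i → ∃ j, P j ∧ rel i j) {i₀ : Fin n}
    (h₀ : P i₀) :
    ∃ p γ, IsCircuit rel p γ ∧ ∀ j, P (γ j) := by
  have h' : ∀ i, ∃ j, P i → P j ∧ rel i j := fun i => by
    by_cases hi : P i
    · obtain ⟨j, hj⟩ := h i hi
      exact ⟨j, fun _ => hj⟩
    · exact ⟨i, fun hi' => absurd hi' hi⟩
  choose σ hσ using h'
  have horbit : ∀ a, P (σ^[a] i₀) := fun a => by
    induction a with
    | zero => exact h₀
    | succ a ih => rw [Function.iterate_succ_apply']; exact (hσ _ ih).1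
  obtain ⟨a, b, hab, heq⟩ := Finite.exists_ne_map_eq_of_infinite fun a : ℕ => σ^[a] i₀
  wlog hlt : a < b generalizing a b
  · exact this b a hab.symm heq.symm (lt_of_le_of_ne (not_lt.1 hlt) hab.symm)
  refine ⟨b - a, fun j => σ^[a + j] i₀, ⟨by omega, ?_, fun j _ => ?_⟩, fun j => horbit _⟩
  · simp only [add_zero, Nat.add_sub_cancel' hlt.le, heq]
  · simp only [← add_assoc, Function.iterate_succ_apply']
    exact (hσ _ (horbit _)).2

def circuitGeomMeans {n : ℕ} (arc : Fin n → Fin n → Prop) (d : Fin n → ℝ) : Set ℝ :=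
  {r | ∃ (p : ℕ) (γ : ℕ → Fin n), IsCircuit arc p γ ∧
    r = (∏ j ∈ range p, d (γ j)) ^ ((p : ℝ)⁻¹)}

section circuitGeomMeans

variable {n : ℕ} {arc : Fin n → Fin n → Prop} {d : Fin n → ℝ}

lemma nonneg_of_mem_circuitGeomMeans (hd : 0 ≤ d) {r : ℝ} (hr : r ∈ circuitGeomMeans arc d) :
    0 ≤ r := by
  obtain ⟨p, γ, -, rfl⟩ := hr
  exact Real.rpow_nonneg (prod_nonneg fun j _ => hd _) _

lemma bddAbove_circuitGeomMeans (hd : 0 ≤ d) : BddAbove (circuitGeomMeans arc d) := by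
  refine ⟨∑ i, d i, ?_⟩
  rintro r ⟨p, γ, hγ, rfl⟩
  have hsum : 0 ≤ ∑ i, d i := sum_nonneg fun i _ => hd i
  rw [Real.rpow_inv_le_iff_of_pos (prod_nonneg fun j _ => hd _) hsum (by exact_mod_cast hγ.1),
    Real.rpow_natCast]
  calc ∏ j ∈ range p, d (γ j) ≤ ∏ _j ∈ range p, ∑ i, d i :=
        prod_le_prod (fun j _ => hd _) fun j _ => single_le_sum (fun i _ => hd i) (mem_univ _)
    _ = (∑ i, d i) ^ p := by rw [prod_const, card_range]

lemma le_sSup_circuitGeomMeans (hd : 0 ≤ d) {p : ℕ} {γ : ℕ → Fin n}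
    (hγ : IsCircuit arc p γ) {c : ℝ} (hc : 0 ≤ c)
    (h : c ^ p ≤ ∏ j ∈ range p, d (γ j)) :
    c ≤ sSup (circuitGeomMeans arc d) := by
  refine le_csSup_of_le (bddAbove_circuitGeomMeans hd) ⟨p, γ, hγ, rfl⟩ ?_
  rwa [Real.le_rpow_inv_iff_of_pos hc (prod_nonneg fun j _ => hd _) (by exact_mod_cast hγ.1),
    Real.rpow_natCast]

lemma sInf_circuitGeomMeans_le (hd : 0 ≤ d) {p : ℕ} {γ : ℕ → Fin n}
    (hγ : IsCircuit arc p γ) {c : ℝ} (hc : 0 ≤ c)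
    (h : ∏ j ∈ range p, d (γ j) ≤ c ^ p) :
    sInf (circuitGeomMeans arc d) ≤ c := by
  refine csInf_le_of_le ⟨0, fun r hr => nonneg_of_mem_circuitGeomMeans hd hr⟩
    ⟨p, γ, hγ, rfl⟩ ?_
  rwa [Real.rpow_inv_le_iff_of_pos (prod_nonneg fun j _ => hd _) hc (by exact_mod_cast hγ.1),
    Real.rpow_natCast]

lemma circuitGeomMeans_eq_empty (h : ∀ i j, ¬ arc i j) : circuitGeomMeans arc d = ∅ :=
  Set.eq_empty_of_forall_notMem fun _ ⟨_, _, hγ, _⟩ => h _ _ (hγ.2.2 0 hγ.1)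

end circuitGeomMeans

section Tensor

variable {m n : ℕ} {A : Fin n → (Fin (m - 1) → Fin n) → ℝ} {i : Fin n}

lemma exists_tArc_of_ne_zero (hm : 2 ≤ m) {t : Fin (m - 1) → Fin n}
    (h : A i t ≠ 0) : ∃ j, tArc m n A i j :=
  ⟨t ⟨0, by omega⟩, t, h, _, rfl⟩

lemma Ax_one (i : Fin n) : Ax m n A 1 i = sliceSum m n A i := by
  simp [Ax, sliceSum]

lemma norm_sum_mul_prod_le (hA : ∀ t, 0 ≤ A i t) {x : Fin n → ℂ} {M : ℝ}
    (hM : ∀ j, tArc m n A i j → ‖x j‖ ≤ M) :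
    ‖∑ t, (A i t : ℂ) * ∏ l, x (t l)‖ ≤ sliceSum m n A i * M ^ (m - 1) := by
  rw [sliceSum, sum_mul]
  refine (norm_sum_le _ _).trans (sum_le_sum fun t _ => ?_)
  rw [norm_mul, Complex.norm_real, Real.norm_of_nonneg (hA t), norm_prod]
  rcases eq_or_ne (A i t) 0 with h | h
  · simp [h]
  refine mul_le_mul_of_nonneg_left ?_ (hA t)
  calc ∏ l, ‖x (t l)‖ ≤ ∏ _l : Fin (m - 1), M :=
        prod_le_prod (fun _ _ => norm_nonneg _) fun l _ => hM _ ⟨t, h, l, rfl⟩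
    _ = M ^ (m - 1) := by simp

lemma sliceSum_mul_pow_le_Ax (hA : ∀ t, 0 ≤ A i t) {x : Fin n → ℝ} {M : ℝ}
    (hM₀ : 0 ≤ M) (hM : ∀ j, tArc m n A i j → M ≤ x j) :
    sliceSum m n A i * M ^ (m - 1) ≤ Ax m n A x i := by
  rw [sliceSum, sum_mul]
  refine sum_le_sum fun t _ => ?_
  rcases eq_or_ne (A i t) 0 with h | h
  · simp [h]
  refine mul_le_mul_of_nonneg_left ?_ (hA t)
  calc M ^ (m - 1) = ∏ _l : Fin (m - 1), M := by simp
    _ ≤ ∏ l, x (t l) := prod_le_prod (fun _ _ => hM₀) fun l _ => hM _ ⟨t, h, l, rfl⟩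

theorem norm_le_sSup_circuitGeomMeans_of_isEig (hm : 2 ≤ m) (hA : ∀ i t, 0 ≤ A i t) {μ : ℂ}
    (hμ : IsEig m n A μ) :
    ‖μ‖ ≤ sSup (circuitGeomMeans (tArc m n A) (sliceSum m n A)) := by
  classical
  have hK : 0 ≤ sliceSum m n A := fun i => sum_nonneg fun t _ => hA i t
  rcases eq_or_ne μ 0 with rfl | hμ0
  · simpa using Real.sSup_nonneg fun r hr => nonneg_of_mem_circuitGeomMeans hK hr
  obtain ⟨x, hx0, hx⟩ := hμ
  have step : ∀ i, x i ≠ 0 → ∃ j, x j ≠ 0 ∧ (tArc m n A i j ∧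
      ‖μ‖ * ‖x i‖ ^ (m - 1) ≤ sliceSum m n A i * ‖x j‖ ^ (m - 1)) := by
    intro i hi
    have hlhs : 0 < ‖μ‖ * ‖x i‖ ^ (m - 1) := by positivity
    have hsum : ∑ t, (A i t : ℂ) * ∏ l, x (t l) ≠ 0 := by
      rw [hx i]; exact mul_ne_zero hμ0 (pow_ne_zero _ hi)
    obtain ⟨t, -, ht⟩ := exists_ne_zero_of_sum_ne_zero hsum
    obtain ⟨j₀, hj₀⟩ :=
      exists_tArc_of_ne_zero hm (Complex.ofReal_ne_zero.1 (left_ne_zero_of_mul ht))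
    obtain ⟨j, hj, hjmax⟩ := exists_max_image {j | tArc m n A i j} (fun j => ‖x j‖)
      ⟨j₀, by simpa using hj₀⟩
    have hle : ‖μ‖ * ‖x i‖ ^ (m - 1) ≤ sliceSum m n A i * ‖x j‖ ^ (m - 1) := by
      rw [← norm_pow, ← norm_mul, ← hx i]
      exact norm_sum_mul_prod_le (hA i) fun j' hj' => hjmax j' (by simpa using hj')
    refine ⟨j, fun hxj => ?_, by simpa using hj, hle⟩
    rw [hxj, norm_zero, zero_pow (by omega), mul_zero] at hle
    exact hlhs.not_ge hle
  obtain ⟨i₀, hi₀⟩ := Function.ne_iff.mp hx0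
  obtain ⟨p, γ, hγ, hγx⟩ := exists_isCircuit_of_forall_exists step hi₀
  exact le_sSup_circuitGeomMeans hK (hγ.mono fun _ _ h => h.1) (norm_nonneg _)
    ((hγ.mono fun _ _ h => h.2).pow_le_prod (norm_nonneg _) fun j => by
      have := hγx j; positivity)

lemma bddAbove_norm_eig (hm : 2 ≤ m) (hA : ∀ i t, 0 ≤ A i t) :
    BddAbove {r : ℝ | ∃ μ : ℂ, IsEig m n A μ ∧ ‖μ‖ = r} :=
  ⟨_, by rintro _ ⟨μ, hμ, rfl⟩; exact norm_le_sSup_circuitGeomMeans_of_isEig hm hA hμ⟩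

lemma specRad_nonneg : 0 ≤ specRad m n A :=
  Real.sSup_nonneg <| by rintro _ ⟨μ, -, rfl⟩; exact norm_nonneg μ

theorem specRad_le_sSup_circuitGeomMeans (hm : 2 ≤ m) (hA : ∀ i t, 0 ≤ A i t) :
    specRad m n A ≤ sSup (circuitGeomMeans (tArc m n A) (sliceSum m n A)) :=
  Real.sSup_le
    (by rintro _ ⟨μ, hμ, rfl⟩; exact norm_le_sSup_circuitGeomMeans_of_isEig hm hA hμ)
    (Real.sSup_nonneg fun r hr =>
      nonneg_of_mem_circuitGeomMeans (fun i => sum_nonneg fun t _ => hA i t) hr)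

lemma isEig_ofReal {x : Fin n → ℝ} (hx : x ≠ 0) {lam : ℝ}
    (h : ∀ i, Ax m n A x i = lam * x i ^ (m - 1)) : IsEig m n A lam := by
  refine ⟨fun i => x i, fun h0 => hx (funext fun i => by simpa using congrFun h0 i),
    fun i => ?_⟩
  have := congrArg (fun r : ℝ => (r : ℂ)) (h i)
  push_cast [Ax] at this
  exact this

lemma le_specRad_of_eigenpair (hm : 2 ≤ m) (hA : ∀ i t, 0 ≤ A i t) {x : Fin n → ℝ}
    (hx : x ≠ 0) {lam : ℝ} (hlam : 0 ≤ lam) (h : ∀ i, Ax m n A x i = lam * x i ^ (m - 1)) :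
    lam ≤ specRad m n A :=
  le_csSup (bddAbove_norm_eig hm hA) ⟨lam, isEig_ofReal hx h, by simp [abs_of_nonneg hlam]⟩

theorem sInf_circuitGeomMeans_le_of_eigenpair [Nonempty (Fin n)] (hm : 2 ≤ m)
    (hA : ∀ i t, 0 ≤ A i t) {x : Fin n → ℝ} (hx : ∀ j, 0 < x j) {lam : ℝ}
    (hlam : 0 < lam) (h : ∀ i, Ax m n A x i = lam * x i ^ (m - 1)) :
    sInf (circuitGeomMeans (tArc m n A) (sliceSum m n A)) ≤ lam := by
  classical
  have hK : 0 ≤ sliceSum m n A := fun i => sum_nonneg fun t _ => hA i t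
  have step : ∀ i, 0 < x i → ∃ j, 0 < x j ∧ (tArc m n A i j ∧
      sliceSum m n A i * x j ^ (m - 1) ≤ lam * x i ^ (m - 1)) := by
    intro i hi
    have hsum : Ax m n A x i ≠ 0 := by rw [h i]; exact (mul_pos hlam (pow_pos hi _)).ne'
    obtain ⟨t, -, ht⟩ := exists_ne_zero_of_sum_ne_zero hsum
    obtain ⟨j₀, hj₀⟩ := exists_tArc_of_ne_zero hm (left_ne_zero_of_mul ht)
    obtain ⟨j, hj, hjmin⟩ :=
      exists_min_image {j | tArc m n A i j} x ⟨j₀, by simpa using hj₀⟩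
    refine ⟨j, hx j, by simpa using hj, ?_⟩
    rw [← h i]
    exact sliceSum_mul_pow_le_Ax (hA i) (hx j).le fun j' hj' => hjmin j' (by simpa using hj')
  obtain ⟨p, γ, hγ, hγx⟩ :=
    exists_isCircuit_of_forall_exists step (hx (Classical.arbitrary _))
  exact sInf_circuitGeomMeans_le hK (hγ.mono fun _ _ h => h.1) hlam.le
    ((hγ.mono fun _ _ h => h.2).prod_le_pow hK fun j => pow_pos (hγx j) _)

end Tensor

lemma card_filter_image_eq {α : Type*} [DecidableEq α] [Fintype α] {S : Finset α} {m : ℕ}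
    (hS : #S = m) : #{t : Fin m → α | univ.image t = S} = m ! := by
  have hcard : Fintype.card S = m := by simp [hS]
  have mem (t : Fin m → α) (ht : univ.image t = S) (j : Fin m) : t j ∈ S :=
    ht ▸ mem_image_of_mem t (mem_univ j)
  let e : {t : Fin m → α // univ.image t = S} ≃ (Fin m ≃ S) :=
    { toFun := fun t => Equiv.ofBijective (fun j => ⟨t.1 j, mem t.1 t.2 j⟩) <|
        (Fintype.bijective_iff_surjective_and_card _).2 ⟨fun s => by
          obtain ⟨j, -, hj⟩ := mem_image.1 (t.2.symm ▸ s.2 : (s : α) ∈ univ.image t.1)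
          exact ⟨j, Subtype.ext hj⟩, by simp [hcard]⟩
      invFun := fun f => ⟨fun j => f j, by
        ext s
        simpa using
          ⟨fun ⟨a, ha⟩ => ha ▸ (f a).2, fun hs => ⟨f.symm ⟨s, hs⟩, by simp⟩⟩⟩
      left_inv := fun _ => rfl
      right_inv := fun _ => Equiv.ext fun _ => rfl }
  rw [← Fintype.card_subtype, Fintype.card_congr e,
    Fintype.card_equiv ((finCongr hcard.symm).trans (Fintype.equivFin S).symm), Fintype.card_fin]

section Hypergraph

variable {k n : ℕ} {E : Finset (Finset (Fin n))}

lemma adjT_nonneg (i : Fin n) (t : Fin (k - 1) → Fin n) : 0 ≤ adjT k n E i t := by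
  unfold adjT; split_ifs <;> positivity

lemma insert_image_eq_iff (hk : 0 < k) {e : Finset (Fin n)} (he : #e = k) {i : Fin n} (hi : i ∈ e)
    (t : Fin (k - 1) → Fin n) : insert i (univ.image t) = e ↔ univ.image t = e.erase i := by
  refine ⟨fun h => ?_, fun h => by rw [h, insert_erase hi]⟩
  have hlt : #(univ.image t) < #e := by
    have := card_image_le (s := univ) (f := t); simp at this; omega
  have hnot : i ∉ univ.image t := fun hmem => by
    rw [← h, insert_eq_of_mem hmem] at hlt; exact lt_irrefl _ hlt
  rw [← h, erase_insert hnot]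

/-- Each edge `e ∋ i` arises from exactly `(k-1)!` index tuples, which cancels the
normalization `1/(k-1)!`. -/
theorem Ax_adjT (hk : 0 < k) (hunif : ∀ e ∈ E, #e = k) (x : Fin n → ℝ) (i : Fin n) :
    Ax k n (adjT k n E) x i = ∑ e ∈ E with i ∈ e, ∏ v ∈ e.erase i, x v := by
  have hfac : ((k - 1)! : ℝ) ≠ 0 := by positivity
  have hterm (t : Fin (k - 1) → Fin n) : adjT k n E i t * ∏ l, x (t l) =
      ∑ e ∈ E with i ∈ e,
        if insert i (univ.image t) = e then (∏ l, x (t l)) / (k - 1)! else 0 := by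
    rw [sum_ite_eq, adjT]
    by_cases h : insert i (univ.image t) ∈ E
    · rw [if_pos h, if_pos (mem_filter.2 ⟨h, mem_insert_self i _⟩)]; ring
    · rw [if_neg h, if_neg fun h' => h (mem_filter.1 h').1, zero_mul]
  rw [Ax, sum_congr rfl fun t _ => hterm t, sum_comm]
  refine sum_congr rfl fun e he => ?_
  obtain ⟨heE, hie⟩ := mem_filter.1 he
  have hcard : #(e.erase i) = k - 1 := by rw [card_erase_of_mem hie, hunif e heE]
  rw [← sum_filter]
  simp_rw [insert_image_eq_iff hk (hunif e heE) hie]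
  calc ∑ t with univ.image t = e.erase i, (∏ l, x (t l)) / (k - 1)!
      = ∑ t with univ.image t = e.erase i, (∏ v ∈ e.erase i, x v) / (k - 1)! := by
        refine sum_congr rfl fun t ht => ?_
        have ht := (mem_filter.1 ht).2
        have hinj : Set.InjOn t (univ : Finset (Fin (k - 1))) :=
          card_image_iff.1 (by rw [ht, hcard, card_univ, Fintype.card_fin])
        rw [← ht, prod_image fun a ha b hb hab => hinj ha hb hab]
    _ = ∏ v ∈ e.erase i, x v := by
        rw [sum_const, card_filter_image_eq hcard, nsmul_eq_mul, mul_div_cancel₀ _ hfac]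

lemma sliceSum_adjT (hk : 0 < k) (hunif : ∀ e ∈ E, #e = k) (i : Fin n) :
    sliceSum k n (adjT k n E) i = deg n E i := by
  rw [← Ax_one, Ax_adjT hk hunif]
  simp [deg]

end Hypergraph

section EdgePoly

variable {k n : ℕ} {E : Finset (Finset (Fin n))}

/-- `edgePoly E y = k⁻¹ ∑ᵢ yᵢ (A_H y^(k-1))ᵢ`. -/
def edgePoly (E : Finset (Finset (Fin n))) (y : Fin n → ℝ) : ℝ :=
  ∑ e ∈ E, ∏ v ∈ e, y v

lemma continuous_edgePoly : Continuous (edgePoly E) :=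
  continuous_finsetSum _ fun _ _ => continuous_finsetProd _ fun v _ => continuous_apply v

lemma edgePoly_smul (hunif : ∀ e ∈ E, #e = k) (c : ℝ) (y : Fin n → ℝ) :
    edgePoly E (c • y) = c ^ k * edgePoly E y := by
  simp only [edgePoly, mul_sum, Pi.smul_apply, smul_eq_mul, prod_mul_distrib, prod_const]
  exact sum_congr rfl fun e he => by rw [hunif e he]

lemma edgePoly_update (x : Fin n → ℝ) (i : Fin n) (s : ℝ) :
    edgePoly E (Function.update x i s) =
      ∑ e ∈ E with i ∉ e, ∏ v ∈ e, x v +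
        s * ∑ e ∈ E with i ∈ e, ∏ v ∈ e.erase i, x v := by
  rw [edgePoly, ← sum_filter_not_add_sum_filter E (i ∈ ·), mul_sum]
  congr 1 <;> refine sum_congr rfl fun e he => ?_
  · exact prod_congr rfl fun v hv =>
      Function.update_of_ne (fun h : v = i => (mem_filter.1 he).2 (h ▸ hv)) _ _
  · rw [← mul_prod_erase e _ (mem_filter.1 he).2, Function.update_self]
    exact congrArg _ (prod_congr rfl fun v hv => Function.update_of_ne (ne_of_mem_erase hv) _ _)

lemma sum_update_pow (x : Fin n → ℝ) (i : Fin n) (s : ℝ) :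
    ∑ v, Function.update x i s v ^ k = s ^ k + ∑ v ∈ univ.erase i, x v ^ k := by
  rw [← add_sum_erase _ _ (mem_univ i), Function.update_self]
  exact congrArg _ (sum_congr rfl fun v hv => by rw [Function.update_of_ne (ne_of_mem_erase hv)])

/-- `x` is a normalized maximizer of the quotient `edgePoly E y / ∑ y_v^k` over `y ≥ 0`. -/
structure IsEdgePolyMax (k : ℕ) (E : Finset (Finset (Fin n))) (x : Fin n → ℝ) : Prop where
  nonneg : 0 ≤ x
  sum_pow : ∑ v, x v ^ k = 1
  le : ∀ y, 0 ≤ y → edgePoly E y ≤ edgePoly E x * ∑ v, y v ^ k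

lemma exists_isEdgePolyMax [Nonempty (Fin n)] (hk : k ≠ 0) (hunif : ∀ e ∈ E, #e = k) :
    ∃ x, IsEdgePolyMax k E x := by
  set K : Set (Fin n → ℝ) := {y | 0 ≤ y ∧ ∑ v, y v ^ k = 1}
  have hKsub : K ⊆ Set.Icc 0 1 := fun y hy => ⟨hy.1, fun v => by
    by_contra! h
    have := single_le_sum (fun w _ => pow_nonneg (hy.1 w) k) (mem_univ v)
    rw [hy.2] at this
    exact (one_lt_pow₀ h hk).not_ge this⟩
  have hKclosed : IsClosed K :=
    (isClosed_le continuous_const continuous_id).inter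
      (isClosed_eq (continuous_finsetSum _ fun v _ => (continuous_apply v).pow k) continuous_const)
  have hKne : K.Nonempty := ⟨Pi.single (Classical.arbitrary _) 1, by
    refine ⟨Pi.single_nonneg.2 zero_le_one, ?_⟩
    simp [Pi.single_apply, ite_pow, zero_pow hk]⟩
  obtain ⟨x, ⟨hx0, hx1⟩, hmax⟩ :=
    (isCompact_Icc.of_isClosed_subset hKclosed hKsub).exists_isMaxOn hKne
      (continuous_edgePoly (E := E)).continuousOn
  refine ⟨x, hx0, hx1, fun y hy => ?_⟩
  set s := ∑ v, y v ^ k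
  rcases (sum_nonneg fun v _ => pow_nonneg (hy v) k : 0 ≤ s).eq_or_lt with hs | hs
  · have hy0 : y = 0 := funext fun v => pow_eq_zero_iff hk |>.1 <|
      (sum_eq_zero_iff_of_nonneg fun w _ => pow_nonneg (hy w) k).1 hs.symm v (mem_univ v)
    have := edgePoly_smul hunif 0 (0 : Fin n → ℝ)
    rw [zero_smul, zero_pow hk, zero_mul] at this
    rw [hy0, this, show s = 0 from hs.symm, mul_zero]
  set c : ℝ := s⁻¹ ^ (k⁻¹ : ℝ)
  have hck : c ^ k = s⁻¹ := Real.rpow_inv_natCast_pow (inv_nonneg.2 hs.le) hk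
  have hcy : c • y ∈ K := by
    refine ⟨smul_nonneg (by positivity) hy, ?_⟩
    simp only [Pi.smul_apply, smul_eq_mul, mul_pow, ← mul_sum, hck]
    exact inv_mul_cancel₀ hs.ne'
  have : edgePoly E (c • y) ≤ edgePoly E x := hmax hcy
  rwa [edgePoly_smul hunif, hck, inv_mul_le_iff₀ hs, mul_comm] at this

end EdgePoly

lemma exists_pos_mul_pow_lt {c C : ℝ} {m k : ℕ} (hc : 0 < c) (hmk : m < k) :
    ∃ ε > 0, C * ε ^ k < c * ε ^ m := by
  have hcont : Continuous fun ε : ℝ => C * ε ^ (k - m) := by fun_prop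
  have hlim : Tendsto (fun ε : ℝ => C * ε ^ (k - m)) (𝓝[>] 0) (𝓝 0) := by
    simpa [zero_pow (Nat.sub_ne_zero_of_lt hmk)] using
      (hcont.tendsto 0).mono_left nhdsWithin_le_nhds
  obtain ⟨ε, hε, hεpos⟩ :=
    ((hlim.eventually (gt_mem_nhds hc)).and self_mem_nhdsWithin).exists
  refine ⟨ε, hεpos, ?_⟩
  calc C * ε ^ k = C * ε ^ (k - m) * ε ^ m := by
        rw [mul_assoc, ← pow_add, Nat.sub_add_cancel hmk.le]
    _ < c * ε ^ m := mul_lt_mul_of_pos_right hε (pow_pos hεpos m)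

namespace IsEdgePolyMax

variable {k n : ℕ} {E : Finset (Finset (Fin n))} {x : Fin n → ℝ}

/-- Raising the zero coordinates `Z` of an edge `e` that also has a positive coordinate to `ε`
gains at least `c ε^|Z|` in `edgePoly` but costs only `|Z| ε^k` in `∑ x_v^k`, and `|Z| < k`. -/
lemma pos_of_mem_edge (hx : IsEdgePolyMax k E x) (hunif : ∀ e ∈ E, #e = k) {e : Finset (Fin n)}
    (he : e ∈ E) {a b : Fin n} (ha : a ∈ e) (hxa : 0 < x a) (hb : b ∈ e) : 0 < x b := by
  classical
  by_contra! hxb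
  have hk : k ≠ 0 := by have := hunif e he; have := card_pos.2 ⟨a, ha⟩; omega
  set Z := e.filter fun v => x v = 0
  have hxZ : ∀ v ∈ Z, x v = 0 := fun v hv => (mem_filter.1 hv).2
  have hZk : #Z < k := hunif e he ▸ card_lt_card
    ⟨filter_subset _ _, fun h => hxa.ne' (hxZ a (h ha))⟩
  set c := ∏ v ∈ e \ Z, x v
  have hc : 0 < c := prod_pos fun v hv => (hx.nonneg v).lt_of_ne' fun h0 =>
    (mem_sdiff.1 hv).2 (mem_filter.2 ⟨(mem_sdiff.1 hv).1, h0⟩)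
  obtain ⟨ε, hε, hlt⟩ := exists_pos_mul_pow_lt (C := edgePoly E x * #Z) hc hZk
  set y : Fin n → ℝ := fun v => if v ∈ Z then ε else x v
  have hxy : x ≤ y := fun v => by
    by_cases hv : v ∈ Z <;> simp [y, hv, hxZ, hε.le]
  have hsum : ∑ v, y v ^ k = 1 + #Z * ε ^ k := by
    have (v : Fin n) : y v ^ k = x v ^ k + if v ∈ Z then ε ^ k else 0 := by
      by_cases hv : v ∈ Z <;> simp [y, hv, hxZ, zero_pow hk]
    simp only [this, sum_add_distrib, hx.sum_pow, sum_ite_mem, univ_inter, sum_const,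
      nsmul_eq_mul]
  have hgain : edgePoly E x + c * ε ^ #Z ≤ edgePoly E y := by
    have hey : ∏ v ∈ e, y v = c * ε ^ #Z := by
      rw [← prod_sdiff (filter_subset (fun v => x v = 0) e)]
      congr 1
      · exact prod_congr rfl fun v hv => by simp [y, (mem_sdiff.1 hv).2]
      · rw [prod_congr rfl fun v (hv : v ∈ Z) => show y v = ε by simp [y, hv], prod_const]
    have hex : ∏ v ∈ e, x v = 0 := prod_eq_zero hb (le_antisymm hxb (hx.nonneg b))
    have := single_le_sum (f := fun e => ∏ v ∈ e, y v - ∏ v ∈ e, x v)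
      (fun e _ => sub_nonneg.2 (prod_le_prod (fun v _ => hx.nonneg v) fun v _ => hxy v)) he
    simp only [sum_sub_distrib, hey, hex, sub_zero] at this
    rw [edgePoly, edgePoly]
    linarith
  have := hx.le y (hx.nonneg.trans hxy)
  rw [hsum] at this
  linarith

lemma pos (hx : IsEdgePolyMax k E x) (hk : k ≠ 0) (hunif : ∀ e ∈ E, #e = k)
    (hconn : HConnected n E) (v : Fin n) : 0 < x v := by
  obtain ⟨s, hs⟩ : ∃ s, 0 < x s := by
    by_contra! h
    have := hx.sum_pow
    simp [le_antisymm (h _) (hx.nonneg _), zero_pow hk] at this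
  induction hconn s v with
  | refl => exact hs
  | tail _ hstep ih =>
    obtain ⟨e, he, hu, hw⟩ := hstep
    exact hx.pos_of_mem_edge hunif he hu ih hw

/-- At a positive coordinate the maximizer is a critical point of the Lagrangian
`edgePoly E x * ∑ y_v^k - edgePoly E y` in the `i`-th variable. -/
lemma eigen_eq (hx : IsEdgePolyMax k E x) {i : Fin n} (hi : 0 < x i) :
    ∑ e ∈ E with i ∈ e, ∏ v ∈ e.erase i, x v = k * edgePoly E x * x i ^ (k - 1) := by
  set a := ∑ e ∈ E with i ∉ e, ∏ v ∈ e, x v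
  set B := ∑ e ∈ E with i ∈ e, ∏ v ∈ e.erase i, x v
  set D := ∑ v ∈ univ.erase i, x v ^ k
  set g : ℝ → ℝ := fun s => edgePoly E x * (s ^ k + D) - (a + s * B)
  have hg : ∀ s, g s = edgePoly E x * ∑ v, Function.update x i s v ^ k -
      edgePoly E (Function.update x i s) := fun s => by
    rw [sum_update_pow, edgePoly_update]
  have hmin : IsLocalMin g (x i) := by
    filter_upwards [Ioi_mem_nhds hi] with s hs
    have hnn : 0 ≤ Function.update x i s := fun v => by
      rcases eq_or_ne v i with rfl | hv
      · simpa using hs.out.le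
      · simpa [hv] using hx.nonneg v
    rw [hg, hg, Function.update_eq_self, hx.sum_pow, mul_one, sub_self, sub_nonneg]
    exact hx.le _ hnn
  have hderiv : HasDerivAt g (edgePoly E x * (k * x i ^ (k - 1)) - B) (x i) := by
    simpa using (((hasDerivAt_pow k (x i)).add_const D).const_mul (edgePoly E x)).fun_sub
      (((hasDerivAt_id' (x i)).mul_const B).const_add a)
  linear_combination -(hmin.hasDerivAt_eq_zero hderiv)

end IsEdgePolyMax

theorem exists_pos_eigenpair_adjT {k n : ℕ} [Nonempty (Fin n)] (hk : 0 < k)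
    {E : Finset (Finset (Fin n))} (hunif : ∀ e ∈ E, #e = k) (hconn : HConnected n E)
    (hE : E.Nonempty) :
    ∃ lam > 0, ∃ x : Fin n → ℝ, (∀ v, 0 < x v) ∧
      ∀ i, Ax k n (adjT k n E) x i = lam * x i ^ (k - 1) := by
  obtain ⟨e, he⟩ := hE
  obtain ⟨x, hx⟩ := exists_isEdgePolyMax hk.ne' hunif
  have hpos := hx.pos hk.ne' hunif hconn
  have hF : 0 < edgePoly E x :=
    (prod_pos fun v _ => hpos v).trans_le <|
      single_le_sum (fun e _ => prod_nonneg fun v _ => (hpos v).le) he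
  exact ⟨k * edgePoly E x, by positivity, x, hpos, fun i => by
    rw [Ax_adjT hk hunif, hx.eigen_eq (hpos i)]⟩

theorem stmt10_general (k n : ℕ) (hk : 2 ≤ k)
    (E : Finset (Finset (Fin n))) (hunif : ∀ e ∈ E, e.card = k)
    (hconn : HConnected n E) :
    sInf {r : ℝ | ∃ (p : ℕ) (γ : ℕ → Fin n), IsCircuit (tArc k n (adjT k n E)) p γ ∧
        r = (∏ j ∈ Finset.range p, (deg n E (γ j) : ℝ)) ^ ((p : ℝ)⁻¹)}
      ≤ specRad k n (adjT k n E) ∧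
    specRad k n (adjT k n E) ≤
      sSup {r : ℝ | ∃ (p : ℕ) (γ : ℕ → Fin n), IsCircuit (tArc k n (adjT k n E)) p γ ∧
        r = (∏ j ∈ Finset.range p, (deg n E (γ j) : ℝ)) ^ ((p : ℝ)⁻¹)} := by
  have hdeg : (fun i => (deg n E i : ℝ)) = sliceSum k n (adjT k n E) :=
    funext fun i => (sliceSum_adjT (by omega) hunif i).symm
  change sInf (circuitGeomMeans _ fun i => (deg n E i : ℝ)) ≤ _ ∧
    _ ≤ sSup (circuitGeomMeans _ fun i => (deg n E i : ℝ))
  rw [hdeg]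
  refine ⟨?_, specRad_le_sSup_circuitGeomMeans hk fun _ _ => adjT_nonneg _ _⟩
  rcases E.eq_empty_or_nonempty with rfl | hE
  -- without edges there are no circuits, and `sInf ∅ = 0`
  · rw [circuitGeomMeans_eq_empty fun i j ⟨t, ht, _⟩ => ht (by simp [adjT]), Real.sInf_empty]
    exact specRad_nonneg
  obtain ⟨e, he⟩ := hE
  obtain ⟨v, -⟩ := card_pos.1 (by rw [hunif e he]; omega : 0 < #e)
  have : Nonempty (Fin n) := ⟨v⟩
  obtain ⟨lam, hlam, x, hx, heig⟩ :=
    exists_pos_eigenpair_adjT (by omega) hunif hconn ⟨e, he⟩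
  exact (sInf_circuitGeomMeans_le_of_eigenpair hk (fun _ _ => adjT_nonneg _ _) hx hlam heig).trans
    (le_specRad_of_eigenpair hk (fun _ _ => adjT_nonneg _ _)
      (fun h => (hx v).ne' (congrFun h v)) hlam.le heig)

theorem stmt10 (k n : ℕ) (hk : 2 ≤ k) (hn : 0 < n)
    (E : Finset (Finset (Fin n))) (hunif : ∀ e ∈ E, e.card = k)
    (hconn : HConnected n E) :
    sInf {r : ℝ | ∃ (p : ℕ) (γ : ℕ → Fin n), IsCircuit (tArc k n (adjT k n E)) p γ ∧
        r = (∏ j ∈ Finset.range p, (deg n E (γ j) : ℝ)) ^ ((p : ℝ)⁻¹)}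
      ≤ specRad k n (adjT k n E) ∧
    specRad k n (adjT k n E) ≤
      sSup {r : ℝ | ∃ (p : ℕ) (γ : ℕ → Fin n), IsCircuit (tArc k n (adjT k n E)) p γ ∧
        r = (∏ j ∈ Finset.range p, (deg n E (γ j) : ℝ)) ^ ((p : ℝ)⁻¹)} :=
  stmt10_general k n hk E hunif hconn
end
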